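/- Let 0 < γ₁ ≤ 1 ≤ γ₂. Let z₁, z₂ > 0, let x₁, x₂ be points of a Euclidean space E and y₁, y₂ points of a Euclidean space E', and suppose γ₁·‖x₁ − x₂‖ ≤ ‖y₁ − y₂‖ ≤ γ₂·‖x₁ − x₂‖. Then γ₁·d_H((z₁,x₁),(z₂,x₂)) ≤ d_H((z₁,y₁),(z₂,y₂)) ≤ γ₂·d_H((z₁,x₁),(z₂,x₂)), where d_H((z,x),(z',x')) = arcosh(1 + (‖x − x'‖² + (z − z')²)/(2·z·z')). -/

import Mathlib

/-!
Put `t = (‖x₁ - x₂‖² + (z₁ - z₂)²) / (2 z₁ z₂)`, so that `dH = arcosh (1 + t)`. Since the height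
term is unchanged and `γ₁ ≤ 1 ≤ γ₂`, stretching the horizontal distance by a factor in `[γ₁, γ₂]`
multiplies `t` by a factor in `[γ₁², γ₂²]`. It therefore suffices that
`arcosh (1 + γ² t) ≤ γ arcosh (1 + t)` for `γ ≥ 1` (the lower bound is this for `γ₁⁻¹`).
Writing `1 + t = cosh s` and `cosh x = 1 + 2 sinh² (x / 2)`, this is
`γ sinh (s / 2) ≤ sinh (γ s / 2)`, which holds because `sinh` is convex on `[0, ∞)` and vanishes at `0`.
-/

/-- The inverse hyperbolic cosine. -/
noncomputable def arcosh (x : ℝ) : ℝ := Real.log (x + Real.sqrt (x ^ 2 - 1))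

/-- The hyperbolic distance, in the Poincaré half-space model, between points
`(z, x)` and `(z', x')` with heights `z, z' > 0`. -/
noncomputable def dH {E : Type*} [NormedAddCommGroup E] (z : ℝ) (x : E) (z' : ℝ) (x' : E) : ℝ :=
  arcosh (1 + (‖x - x'‖ ^ 2 + (z - z') ^ 2) / (2 * z * z'))

theorem ConvexOn.mul_apply_le_apply_mul {f : ℝ → ℝ} (hf : ConvexOn ℝ (Set.Ici 0) f)
    (hf0 : f 0 ≤ 0) {γ u : ℝ} (hγ : 1 ≤ γ) (hu : 0 ≤ u) : γ * f u ≤ f (γ * u) := by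
  have hγ0 : 0 < γ := by linarith
  have h := hf.2 (Set.mem_Ici.2 (by positivity : 0 ≤ γ * u)) (Set.self_mem_Ici (a := (0 : ℝ)))
    (inv_nonneg.2 hγ0.le) (sub_nonneg.2 (inv_le_one_of_one_le₀ hγ)) (add_sub_cancel _ _)
  simp only [smul_eq_mul, mul_zero, add_zero, inv_mul_cancel_left₀ hγ0.ne'] at h
  calc γ * f u ≤ γ * (γ⁻¹ * f (γ * u) + (1 - γ⁻¹) * f 0) := by gcongr
    _ ≤ γ * (γ⁻¹ * f (γ * u)) := by
        gcongr
        exact add_le_of_nonpos_right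
          (mul_nonpos_of_nonneg_of_nonpos (sub_nonneg.2 (inv_le_one_of_one_le₀ hγ)) hf0)
    _ = f (γ * u) := by field_simp

namespace Real

theorem convexOn_sinh_Ici : ConvexOn ℝ (Set.Ici 0) sinh := by
  refine MonotoneOn.convexOn_of_deriv (convex_Ici 0) continuous_sinh.continuousOn
    differentiable_sinh.differentiableOn ?_
  rw [deriv_sinh, interior_Ici]
  intro x hx y hy hxy
  rw [cosh_le_cosh, abs_of_pos hx, abs_of_pos hy]
  exact hxy

theorem cosh_eq_one_add_two_mul_sinh_half_sq (x : ℝ) : cosh x = 1 + 2 * sinh (x / 2) ^ 2 := by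
  have h := cosh_two_mul (x / 2)
  rw [mul_div_cancel₀ x two_ne_zero, cosh_sq] at h
  rw [h]
  ring

theorem one_add_sq_mul_cosh_sub_one_le {γ s : ℝ} (hγ : 1 ≤ γ) (hs : 0 ≤ s) :
    1 + γ ^ 2 * (cosh s - 1) ≤ cosh (γ * s) := by
  have hsinh : γ * sinh (s / 2) ≤ sinh (γ * (s / 2)) :=
    convexOn_sinh_Ici.mul_apply_le_apply_mul sinh_zero.le hγ (by positivity)
  have hsinh0 : 0 ≤ γ * sinh (s / 2) := mul_nonneg (by linarith) (sinh_nonneg_iff.2 (by positivity))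
  calc 1 + γ ^ 2 * (cosh s - 1) = 1 + 2 * (γ * sinh (s / 2)) ^ 2 := by
        rw [cosh_eq_one_add_two_mul_sinh_half_sq]; ring
    _ ≤ 1 + 2 * sinh (γ * (s / 2)) ^ 2 := by gcongr
    _ = cosh (γ * s) := by rw [cosh_eq_one_add_two_mul_sinh_half_sq, mul_div_assoc]

theorem arcosh_one_add_sq_mul_le {γ t : ℝ} (hγ : 1 ≤ γ) (ht : 0 ≤ t) :
    arcosh (1 + γ ^ 2 * t) ≤ γ * arcosh (1 + t) := by
  set s := arcosh (1 + t)
  have hs₀ : 0 ≤ s := arcosh_nonneg (by linarith)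
  have hcosh := one_add_sq_mul_cosh_sub_one_le hγ hs₀
  rw [cosh_arcosh (by linarith), add_sub_cancel_left] at hcosh
  calc arcosh (1 + γ ^ 2 * t) ≤ arcosh (cosh (γ * s)) :=
        (arcosh_le_arcosh (by positivity) (cosh_pos _)).2 hcosh
    _ = γ * s := arcosh_cosh (mul_nonneg (by linarith) hs₀)

theorem arcosh_one_add_le_mul_arcosh {γ t t' : ℝ} (hγ : 1 ≤ γ) (ht : 0 ≤ t) (ht' : 0 ≤ t')
    (h : t' ≤ γ ^ 2 * t) : arcosh (1 + t') ≤ γ * arcosh (1 + t) :=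
  ((arcosh_le_arcosh (by positivity) (by positivity)).2 (by linarith)).trans
    (arcosh_one_add_sq_mul_le hγ ht)

theorem mul_arcosh_le_arcosh_one_add {γ t t' : ℝ} (hγ₀ : 0 < γ) (hγ₁ : γ ≤ 1) (ht : 0 ≤ t)
    (h : γ ^ 2 * t ≤ t') : γ * arcosh (1 + t) ≤ arcosh (1 + t') := by
  have key := arcosh_one_add_sq_mul_le (one_le_inv_iff₀.2 ⟨hγ₀, hγ₁⟩) (t := γ ^ 2 * t)
    (by positivity)
  rw [inv_pow, inv_mul_cancel_left₀ (by positivity)] at key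
  exact ((le_inv_mul_iff₀ hγ₀).1 key).trans
    ((arcosh_le_arcosh (by positivity) (by nlinarith)).2 (by linarith))

end Real

theorem arcosh_eq_real_arcosh : arcosh = Real.arcosh := rfl

theorem hyperbolic_stretch_transfer_general
    {E : Type*} [NormedAddCommGroup E]
    {E' : Type*} [NormedAddCommGroup E']
    (γ₁ γ₂ : ℝ) (hγ₁ : 0 < γ₁) (hγ₁1 : γ₁ ≤ 1) (hγ₂ : 1 ≤ γ₂)
    (z₁ z₂ : ℝ) (hz₁ : 0 < z₁) (hz₂ : 0 < z₂)
    (x₁ x₂ : E) (y₁ y₂ : E')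
    (hlow : γ₁ * ‖x₁ - x₂‖ ≤ ‖y₁ - y₂‖) (hhigh : ‖y₁ - y₂‖ ≤ γ₂ * ‖x₁ - x₂‖) :
    γ₁ * dH z₁ x₁ z₂ x₂ ≤ dH z₁ y₁ z₂ y₂ ∧ dH z₁ y₁ z₂ y₂ ≤ γ₂ * dH z₁ x₁ z₂ x₂ := by
  simp only [dH, arcosh_eq_real_arcosh]
  have hq : 0 ≤ (z₁ - z₂) ^ 2 := sq_nonneg _
  have hlow_sq : γ₁ ^ 2 * (‖x₁ - x₂‖ ^ 2 + (z₁ - z₂) ^ 2) ≤ ‖y₁ - y₂‖ ^ 2 + (z₁ - z₂) ^ 2 := by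
    rw [mul_add, ← mul_pow]
    gcongr
    exact mul_le_of_le_one_left hq (pow_le_one₀ hγ₁.le hγ₁1)
  have hhigh_sq : ‖y₁ - y₂‖ ^ 2 + (z₁ - z₂) ^ 2 ≤ γ₂ ^ 2 * (‖x₁ - x₂‖ ^ 2 + (z₁ - z₂) ^ 2) := by
    rw [mul_add, ← mul_pow]
    gcongr
    exact le_mul_of_one_le_left hq (one_le_pow₀ hγ₂)
  refine ⟨Real.mul_arcosh_le_arcosh_one_add hγ₁ hγ₁1 (by positivity) ?_,
    Real.arcosh_one_add_le_mul_arcosh hγ₂ (by positivity) (by positivity) ?_⟩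
  · rw [← mul_div_assoc]; gcongr
  · rw [← mul_div_assoc]; gcongr

/-- Pointwise form of Theorem 3.2: if the horizontal coordinates are stretched by
factors between `γ₁` and `γ₂` and the heights are unchanged, then the hyperbolic
distances are stretched by factors between `γ₁` and `γ₂`. -/
theorem hyperbolic_stretch_transfer
    {E : Type*} [NormedAddCommGroup E] [InnerProductSpace ℝ E] [FiniteDimensional ℝ E]
    {E' : Type*} [NormedAddCommGroup E'] [InnerProductSpace ℝ E'] [FiniteDimensional ℝ E']
    (γ₁ γ₂ : ℝ) (hγ₁ : 0 < γ₁) (hγ₁1 : γ₁ ≤ 1) (hγ₂ : 1 ≤ γ₂)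
    (z₁ z₂ : ℝ) (hz₁ : 0 < z₁) (hz₂ : 0 < z₂)
    (x₁ x₂ : E) (y₁ y₂ : E')
    (hlow : γ₁ * ‖x₁ - x₂‖ ≤ ‖y₁ - y₂‖) (hhigh : ‖y₁ - y₂‖ ≤ γ₂ * ‖x₁ - x₂‖) :
    γ₁ * dH z₁ x₁ z₂ x₂ ≤ dH z₁ y₁ z₂ y₂ ∧ dH z₁ y₁ z₂ y₂ ≤ γ₂ * dH z₁ x₁ z₂ x₂ :=
  hyperbolic_stretch_transfer_general γ₁ γ₂ hγ₁ hγ₁1 hγ₂ z₁ z₂ hz₁ hz₂ x₁ x₂ y₁ y₂ hlow hhigh
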